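/- arXiv:2410.16933 — 6 statements merged into one kernel-verified Lean document; each statement's English description precedes it below -/
import Mathlib

section
/- Let h_a ∈ ℝ³ be constant, D = diag(D₁,D₂,D₃), α, η > 0, and let (m,v) : ℝ → ℝ³ × ℝ³ be a continuously differentiable solution of the first-order iLLG system (S): ṁ = v, v̇ = −|v|² m + η⁻¹ [ m × v − m × (m × h_eff(m)) − α v ], with |m(t)| = 1 for all t. Then the function W(m,v) := (η/2)|v|² + h(m), where h(m) := ½(D₁m₁² + D₂m₂² + D₃m₃² − D₁) − h_a · m, satisfies d/dt W(m(t), v(t)) = −α |v(t)|² for all t; in particular W is non-increasing along the solution. -/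
open Matrix Real

/-- The magnetic "free energy" `W(m,v) = (η/2)|v|² + h(m)` with
`h(m) = ½(D₁m₁² + D₂m₂² + D₃m₃² − D₁) − h_a · m`. -/
noncomputable def Wfun (hA : Fin 3 → ℝ) (D1 D2 D3 η : ℝ) (m v : Fin 3 → ℝ) : ℝ :=
  η / 2 * (v ⬝ᵥ v)
    + (1 / 2 * (D1 * (m 0) ^ 2 + D2 * (m 1) ^ 2 + D3 * (m 2) ^ 2 - D1) - hA ⬝ᵥ m)

/-- Along any unit-sphere solution of the first-order iLLG system
`ṁ = v`, `v̇ = −|v|² m + η⁻¹ [ m × v − m × (m × h_eff(m)) − α v ]`,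
the energy `W` satisfies `d/dt W(m(t),v(t)) = −α |v(t)|²`; in particular `W` is
non-increasing along the solution. -/
theorem stmt_2
    (hA : Fin 3 → ℝ) (D1 D2 D3 α η : ℝ) (hα : 0 < α) (hη : 0 < η)
    (m v : ℝ → (Fin 3 → ℝ))
    (hm : ∀ t : ℝ, HasDerivAt m (v t) t)
    (hv : ∀ t : ℝ, HasDerivAt v
      (-(v t ⬝ᵥ v t) • m t
        + η⁻¹ • ((m t) ⨯₃ (v t)
            - (m t) ⨯₃ ((m t) ⨯₃ (hA - (Matrix.diagonal ![D1, D2, D3]).mulVec (m t)))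
            - α • v t)) t)
    (hsphere : ∀ t : ℝ, m t ⬝ᵥ m t = 1) :
    (∀ t : ℝ, deriv (fun s => Wfun hA D1 D2 D3 η (m s) (v s)) t = -α * (v t ⬝ᵥ v t)) ∧
    (∀ s t : ℝ, s ≤ t →
      Wfun hA D1 D2 D3 η (m t) (v t) ≤ Wfun hA D1 D2 D3 η (m s) (v s)) := by
  have hne : η ≠ 0 := ne_of_gt hη
  have hmc : ∀ t i, HasDerivAt (fun s => m s i) (v t i) t := fun t i =>
    (hasDerivAt_pi.mp (hm t)) i
  have hnorm : ∀ t, m t 0 * m t 0 + m t 1 * m t 1 + m t 2 * m t 2 = 1 := by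
    intro t; have := hsphere t
    simpa [dotProduct, Fin.sum_univ_three] using this
  have horth : ∀ t, m t 0 * v t 0 + m t 1 * v t 1 + m t 2 * v t 2 = 0 := by
    intro t
    have hq : HasDerivAt (fun s => m s 0 * m s 0 + (m s 1 * m s 1 + m s 2 * m s 2))
        (v t 0 * m t 0 + m t 0 * v t 0 + (v t 1 * m t 1 + m t 1 * v t 1
          + (v t 2 * m t 2 + m t 2 * v t 2))) t :=
      ((hmc t 0).mul (hmc t 0)).add (((hmc t 1).mul (hmc t 1)).add ((hmc t 2).mul (hmc t 2)))
    have heq : (fun s => m s 0 * m s 0 + (m s 1 * m s 1 + m s 2 * m s 2)) = fun _ => (1:ℝ) := by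
      funext s; have := hnorm s; linarith
    rw [heq] at hq
    have h0 := hq.deriv
    rw [deriv_const] at h0
    nlinarith [h0]
  have key : ∀ t, HasDerivAt (fun s => Wfun hA D1 D2 D3 η (m s) (v s)) (-α * (v t ⬝ᵥ v t)) t := by
    intro t
    set w := (-(v t ⬝ᵥ v t) • m t
        + η⁻¹ • ((m t) ⨯₃ (v t)
            - (m t) ⨯₃ ((m t) ⨯₃ (hA - (Matrix.diagonal ![D1, D2, D3]).mulVec (m t)))
            - α • v t)) with hw
    have hvc : ∀ i, HasDerivAt (fun s => v s i) (w i) t := fun i =>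
      (hasDerivAt_pi.mp (hv t)) i
    have hfun : (fun s => Wfun hA D1 D2 D3 η (m s) (v s)) = fun s =>
        η / 2 * (v s 0 * v s 0 + (v s 1 * v s 1 + v s 2 * v s 2))
          + (1 / 2 * (D1 * (m s 0 * m s 0) + (D2 * (m s 1 * m s 1) + D3 * (m s 2 * m s 2)) - D1)
            - (hA 0 * m s 0 + hA 1 * m s 1 + hA 2 * m s 2)) := by
      funext s; simp [Wfun, dotProduct, Fin.sum_univ_three]; ring
    rw [hfun]
    have hD : HasDerivAt (fun s =>
        η / 2 * (v s 0 * v s 0 + (v s 1 * v s 1 + v s 2 * v s 2))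
          + (1 / 2 * (D1 * (m s 0 * m s 0) + (D2 * (m s 1 * m s 1) + D3 * (m s 2 * m s 2)) - D1)
            - (hA 0 * m s 0 + hA 1 * m s 1 + hA 2 * m s 2)))
        (η / 2 * (w 0 * v t 0 + v t 0 * w 0 + (w 1 * v t 1 + v t 1 * w 1
            + (w 2 * v t 2 + v t 2 * w 2)))
          + (1 / 2 * (D1 * (v t 0 * m t 0 + m t 0 * v t 0)
              + (D2 * (v t 1 * m t 1 + m t 1 * v t 1)
              + D3 * (v t 2 * m t 2 + m t 2 * v t 2)) - 0)
            - (hA 0 * v t 0 + hA 1 * v t 1 + hA 2 * v t 2))) t := by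
      exact (( ((hvc 0).mul (hvc 0)).add (((hvc 1).mul (hvc 1)).add
          ((hvc 2).mul (hvc 2))) ).const_mul (η/2)).add
        (( ((((hmc t 0).mul (hmc t 0)).const_mul D1).add
            ((((hmc t 1).mul (hmc t 1)).const_mul D2).add
             (((hmc t 2).mul (hmc t 2)).const_mul D3))).sub (hasDerivAt_const t D1)
          ).const_mul (1/2) |>.sub
          ((((hmc t 0).const_mul (hA 0)).add ((hmc t 1).const_mul (hA 1))).add
            ((hmc t 2).const_mul (hA 2))))
    convert hD using 1
    have hinv : η * η⁻¹ = 1 := mul_inv_cancel₀ hne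
    have ho := horth t
    have hn := hnorm t
    simp only [hw, crossProduct, Matrix.mulVec, Matrix.diagonal, dotProduct,
      Fin.sum_univ_three, Pi.add_apply, Pi.sub_apply, Pi.smul_apply, Pi.neg_apply,
      smul_eq_mul, LinearMap.mk₂_apply, Matrix.cons_val_zero, Matrix.cons_val_one,
      Matrix.head_cons, Matrix.cons_val_two, Matrix.tail_cons, Matrix.of_apply,
      Fin.isValue, neg_mul, mul_ite, mul_zero, Finset.sum_ite_eq,
      Finset.mem_univ, if_true]
    simp only [Fin.reduceEq, reduceIte, if_false, Nat.reduceEqDiff, OfNat.ofNat_ne_zero,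
      OfNat.ofNat_ne_one, one_ne_zero, zero_ne_one, ite_false]
    norm_num
    linear_combination
      ((m t 0*(hA 0 - D1*m t 0) + m t 1*(hA 1 - D2*m t 1) + m t 2*(hA 2 - D3*m t 2))
          * (m t 0*v t 0 + m t 1*v t 1 + m t 2*v t 2)
        - (m t 0*m t 0 + m t 1*m t 1 + m t 2*m t 2)
          * (v t 0*(hA 0 - D1*m t 0) + v t 1*(hA 1 - D2*m t 1) + v t 2*(hA 2 - D3*m t 2))
        + α * (v t 0*v t 0 + v t 1*v t 1 + v t 2*v t 2)) * hinv
      + ((m t 0*(hA 0 - D1*m t 0) + m t 1*(hA 1 - D2*m t 1) + m t 2*(hA 2 - D3*m t 2))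
          + η * (v t 0*v t 0 + v t 1*v t 1 + v t 2*v t 2)) * ho
      + (-(v t 0*(hA 0 - D1*m t 0) + v t 1*(hA 1 - D2*m t 1) + v t 2*(hA 2 - D3*m t 2))) * hn
  constructor
  · exact fun t => (key t).deriv
  · intro s t hst
    have hanti : Antitone (fun s => Wfun hA D1 D2 D3 η (m s) (v s)) := by
      apply antitone_of_deriv_nonpos
      · exact fun x => (key x).differentiableAt
      · intro x
        rw [(key x).deriv]
        have h0 : 0 ≤ v x ⬝ᵥ v x := by
          simp only [dotProduct, Fin.sum_univ_three]
          nlinarith [sq_nonneg (v x 0), sq_nonneg (v x 1), sq_nonneg (v x 2)]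
        nlinarith
    exact hanti hst
end

section
/- Let ĥ = (ĥ₁,ĥ₂,ĥ₃) ∈ ℝ³ with σ := √(ĥ₂² + ĥ₃²) > 0 and ω := |ĥ| > 0, and let Γ = [[0,−ĥ₃,ĥ₂],[ĥ₃,0,−ĥ₁],[−ĥ₂,ĥ₁,0]] (regarded as a complex 3×3 matrix). Define the complex matrix M := (1/(√2 ω)) [[σ, σ, √2 ĥ₁], [σ⁻¹(iωĥ₃ − ĥ₁ĥ₂), −σ⁻¹(iωĥ₃ + ĥ₁ĥ₂), √2 ĥ₂], [−σ⁻¹(iωĥ₂ + ĥ₁ĥ₃), σ⁻¹(iωĥ₂ − ĥ₁ĥ₃), √2 ĥ₃]]. Then M is unitary, i.e. M*M = I where M* is the conjugate transpose, and M diagonalizes Γ: M* Γ M = diag(−iω, iω, 0). -/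
open Matrix Complex

set_option maxHeartbeats 1000000 in
/-- The complex matrix `M` built from `ĥ ∈ ℝ³` (with
`σ = √(ĥ₂²+ĥ₃²) > 0`, `ω = |ĥ| > 0`) is unitary (`M*M = I`) and diagonalizes the
antisymmetric matrix `Γ`: `M* Γ M = diag(−iω, iω, 0)`. -/
theorem stmt_5 (h1 h2 h3 σ ω : ℝ)
    (hσdef : σ = Real.sqrt (h2 ^ 2 + h3 ^ 2))
    (hωdef : ω = Real.sqrt (h1 ^ 2 + h2 ^ 2 + h3 ^ 2))
    (hσ : 0 < σ) (hω : 0 < ω)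
    (Γ M : Matrix (Fin 3) (Fin 3) ℂ)
    (hΓ : Γ = !![0, -(h3 : ℂ), (h2 : ℂ); (h3 : ℂ), 0, -(h1 : ℂ);
        -(h2 : ℂ), (h1 : ℂ), 0])
    (hM : M = (((Real.sqrt 2 * ω : ℝ) : ℂ))⁻¹ •
      !![(σ : ℂ), (σ : ℂ), (Real.sqrt 2 : ℂ) * (h1 : ℂ);
         (σ : ℂ)⁻¹ * (Complex.I * (ω : ℂ) * (h3 : ℂ) - (h1 : ℂ) * (h2 : ℂ)),
           -((σ : ℂ)⁻¹ * (Complex.I * (ω : ℂ) * (h3 : ℂ) + (h1 : ℂ) * (h2 : ℂ))),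
           (Real.sqrt 2 : ℂ) * (h2 : ℂ);
         -((σ : ℂ)⁻¹ * (Complex.I * (ω : ℂ) * (h2 : ℂ) + (h1 : ℂ) * (h3 : ℂ))),
           (σ : ℂ)⁻¹ * (Complex.I * (ω : ℂ) * (h2 : ℂ) - (h1 : ℂ) * (h3 : ℂ)),
           (Real.sqrt 2 : ℂ) * (h3 : ℂ)]) :
    Mᴴ * M = 1 ∧
    Mᴴ * Γ * M = Matrix.diagonal ![-(Complex.I * (ω : ℂ)), Complex.I * (ω : ℂ), 0] := by
  have hσ2 : (σ:ℂ)^2 = (h2:ℂ)^2 + (h3:ℂ)^2 := by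
    have : σ^2 = h2^2 + h3^2 := by rw [hσdef]; exact Real.sq_sqrt (by positivity)
    exact_mod_cast this
  have hω2 : (ω:ℂ)^2 = (h1:ℂ)^2 + (h2:ℂ)^2 + (h3:ℂ)^2 := by
    have : ω^2 = h1^2 + h2^2 + h3^2 := by rw [hωdef]; exact Real.sq_sqrt (by positivity)
    exact_mod_cast this
  have hs2 : ((Real.sqrt 2 : ℝ):ℂ)^2 = 2 := by
    have : (Real.sqrt 2)^2 = 2 := Real.sq_sqrt (by norm_num)
    exact_mod_cast this
  have hI : Complex.I^2 = -1 := Complex.I_sq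
  have hσne : (σ:ℂ) ≠ 0 := by exact_mod_cast hσ.ne'
  have hωne : (ω:ℂ) ≠ 0 := by exact_mod_cast hω.ne'
  have hsne : ((Real.sqrt 2 : ℝ):ℂ) ≠ 0 := by
    exact_mod_cast (Real.sqrt_pos.2 (by norm_num : (0:ℝ) < 2)).ne'
  set N : Matrix (Fin 3) (Fin 3) ℂ :=
    !![(σ:ℂ)^2, (σ:ℂ)^2, (Real.sqrt 2 : ℂ) * (h1:ℂ) * (σ:ℂ);
       Complex.I * (ω:ℂ) * (h3:ℂ) - (h1:ℂ) * (h2:ℂ),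
         -(Complex.I * (ω:ℂ) * (h3:ℂ) + (h1:ℂ) * (h2:ℂ)),
         (Real.sqrt 2 : ℂ) * (h2:ℂ) * (σ:ℂ);
       -(Complex.I * (ω:ℂ) * (h2:ℂ) + (h1:ℂ) * (h3:ℂ)),
         Complex.I * (ω:ℂ) * (h2:ℂ) - (h1:ℂ) * (h3:ℂ),
         (Real.sqrt 2 : ℂ) * (h3:ℂ) * (σ:ℂ)] with hN
  have hk2 : (((Real.sqrt 2 * ω * σ : ℝ)):ℂ)^2 = (2:ℂ) * (ω:ℂ)^2 * (σ:ℂ)^2 := by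
    push_cast
    linear_combination ((ω:ℂ)^2 * (σ:ℂ)^2) * hs2
  have hkne : (((Real.sqrt 2 * ω * σ : ℝ)):ℂ) ≠ 0 := by
    push_cast
    exact mul_ne_zero (mul_ne_zero hsne hωne) hσne
  have hMN : M = (((Real.sqrt 2 * ω * σ : ℝ)):ℂ)⁻¹ • N := by
    rw [hM, hN]
    ext i j
    fin_cases i <;> fin_cases j <;>
      · simp only [Matrix.smul_apply, Matrix.cons_val', Matrix.cons_val_zero,
          Matrix.cons_val_one, Matrix.head_cons, Matrix.empty_val',
          Matrix.cons_val_fin_one, Matrix.head_fin_const, Matrix.of_apply, smul_eq_mul]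
        push_cast
        field_simp
        try ring
  have hNN : Nᴴ * N = ((2:ℂ) * (ω:ℂ)^2 * (σ:ℂ)^2) • (1 : Matrix (Fin 3) (Fin 3) ℂ) := by
    rw [hN]
    ext i j
    fin_cases i <;> fin_cases j
    · simp [Matrix.mul_apply, Fin.sum_univ_three, Matrix.one_apply, Matrix.diagonal,
        RCLike.star_def, _root_.map_mul, map_add, map_sub, map_neg,
        Complex.conj_I, Complex.conj_ofReal]
      try linear_combination ((h3:ℂ)^2 + (h2:ℂ)^2 + -2*(ω:ℂ)^2 + (σ:ℂ)^2) * hσ2 + (-2*(h3:ℂ)^2 + -2*(h2:ℂ)^2 + -1*Complex.I^2*(h3:ℂ)^2 + -1*Complex.I^2*(h2:ℂ)^2) * hω2  + (-1*(h3:ℂ)^4 + -2*(h2:ℂ)^2*(h3:ℂ)^2 + -1*(h2:ℂ)^4 + -1*(h1:ℂ)^2*(h3:ℂ)^2 + -1*(h1:ℂ)^2*(h2:ℂ)^2) * hI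
    · simp [Matrix.mul_apply, Fin.sum_univ_three, Matrix.one_apply, Matrix.diagonal,
        RCLike.star_def, _root_.map_mul, map_add, map_sub, map_neg,
        Complex.conj_I, Complex.conj_ofReal]
      try linear_combination ((h3:ℂ)^2 + (h2:ℂ)^2 + (σ:ℂ)^2) * hσ2 + (Complex.I^2*(h3:ℂ)^2 + Complex.I^2*(h2:ℂ)^2) * hω2  + ((h3:ℂ)^4 + 2*(h2:ℂ)^2*(h3:ℂ)^2 + (h2:ℂ)^4 + (h1:ℂ)^2*(h3:ℂ)^2 + (h1:ℂ)^2*(h2:ℂ)^2) * hI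
    · simp [Matrix.mul_apply, Fin.sum_univ_three, Matrix.one_apply, Matrix.diagonal,
        RCLike.star_def, _root_.map_mul, map_add, map_sub, map_neg,
        Complex.conj_I, Complex.conj_ofReal]
      try linear_combination ((σ:ℂ)*((Real.sqrt 2:ℝ):ℂ)*(h1:ℂ)) * hσ2
    · simp [Matrix.mul_apply, Fin.sum_univ_three, Matrix.one_apply, Matrix.diagonal,
        RCLike.star_def, _root_.map_mul, map_add, map_sub, map_neg,
        Complex.conj_I, Complex.conj_ofReal]
      try linear_combination ((h3:ℂ)^2 + (h2:ℂ)^2 + (σ:ℂ)^2) * hσ2 + (Complex.I^2*(h3:ℂ)^2 + Complex.I^2*(h2:ℂ)^2) * hω2  + ((h3:ℂ)^4 + 2*(h2:ℂ)^2*(h3:ℂ)^2 + (h2:ℂ)^4 + (h1:ℂ)^2*(h3:ℂ)^2 + (h1:ℂ)^2*(h2:ℂ)^2) * hI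
    · simp [Matrix.mul_apply, Fin.sum_univ_three, Matrix.one_apply, Matrix.diagonal,
        RCLike.star_def, _root_.map_mul, map_add, map_sub, map_neg,
        Complex.conj_I, Complex.conj_ofReal]
      try linear_combination ((h3:ℂ)^2 + (h2:ℂ)^2 + -2*(ω:ℂ)^2 + (σ:ℂ)^2) * hσ2 + (-2*(h3:ℂ)^2 + -2*(h2:ℂ)^2 + -1*Complex.I^2*(h3:ℂ)^2 + -1*Complex.I^2*(h2:ℂ)^2) * hω2  + (-1*(h3:ℂ)^4 + -2*(h2:ℂ)^2*(h3:ℂ)^2 + -1*(h2:ℂ)^4 + -1*(h1:ℂ)^2*(h3:ℂ)^2 + -1*(h1:ℂ)^2*(h2:ℂ)^2) * hI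
    · simp [Matrix.mul_apply, Fin.sum_univ_three, Matrix.one_apply, Matrix.diagonal,
        RCLike.star_def, _root_.map_mul, map_add, map_sub, map_neg,
        Complex.conj_I, Complex.conj_ofReal]
      try linear_combination ((σ:ℂ)*((Real.sqrt 2:ℝ):ℂ)*(h1:ℂ)) * hσ2
    · simp [Matrix.mul_apply, Fin.sum_univ_three, Matrix.one_apply, Matrix.diagonal,
        RCLike.star_def, _root_.map_mul, map_add, map_sub, map_neg,
        Complex.conj_I, Complex.conj_ofReal]
      try linear_combination ((σ:ℂ)*((Real.sqrt 2:ℝ):ℂ)*(h1:ℂ)) * hσ2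
    · simp [Matrix.mul_apply, Fin.sum_univ_three, Matrix.one_apply, Matrix.diagonal,
        RCLike.star_def, _root_.map_mul, map_add, map_sub, map_neg,
        Complex.conj_I, Complex.conj_ofReal]
      try linear_combination ((σ:ℂ)*((Real.sqrt 2:ℝ):ℂ)*(h1:ℂ)) * hσ2
    · simp [Matrix.mul_apply, Fin.sum_univ_three, Matrix.one_apply, Matrix.diagonal,
        RCLike.star_def, _root_.map_mul, map_add, map_sub, map_neg,
        Complex.conj_I, Complex.conj_ofReal]
      try linear_combination (((Real.sqrt 2:ℝ):ℂ)^2*(h3:ℂ)^2 + ((Real.sqrt 2:ℝ):ℂ)^2*(h2:ℂ)^2 + ((Real.sqrt 2:ℝ):ℂ)^2*(h1:ℂ)^2 + -2*(ω:ℂ)^2) * hσ2 + (-2*(h3:ℂ)^2 + -2*(h2:ℂ)^2) * hω2 + ((h3:ℂ)^4 + 2*(h2:ℂ)^2*(h3:ℂ)^2 + (h2:ℂ)^4 + (h1:ℂ)^2*(h3:ℂ)^2 + (h1:ℂ)^2*(h2:ℂ)^2) * hs2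
  have hNGN : Nᴴ * Γ * N = ((2:ℂ) * (ω:ℂ)^2 * (σ:ℂ)^2) •
      Matrix.diagonal ![-(Complex.I * (ω:ℂ)), Complex.I * (ω:ℂ), 0] := by
    rw [hN, hΓ]
    ext i j
    fin_cases i <;> fin_cases j
    · simp [Matrix.mul_apply, Fin.sum_univ_three, Matrix.one_apply, Matrix.diagonal,
        RCLike.star_def, _root_.map_mul, map_add, map_sub, map_neg,
        Complex.conj_I, Complex.conj_ofReal]
      try linear_combination (-2*(ω:ℂ)*Complex.I*(h3:ℂ)^2 + -2*(ω:ℂ)*Complex.I*(h2:ℂ)^2 + 2*(ω:ℂ)^3*Complex.I) * hσ2 + (2*(ω:ℂ)*Complex.I*(h3:ℂ)^2 + 2*(ω:ℂ)*Complex.I*(h2:ℂ)^2) * hω2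
    · simp [Matrix.mul_apply, Fin.sum_univ_three, Matrix.one_apply, Matrix.diagonal,
        RCLike.star_def, _root_.map_mul, map_add, map_sub, map_neg,
        Complex.conj_I, Complex.conj_ofReal]
      try ring
    · simp [Matrix.mul_apply, Fin.sum_univ_three, Matrix.one_apply, Matrix.diagonal,
        RCLike.star_def, _root_.map_mul, map_add, map_sub, map_neg,
        Complex.conj_I, Complex.conj_ofReal]
      try ring
    · simp [Matrix.mul_apply, Fin.sum_univ_three, Matrix.one_apply, Matrix.diagonal,
        RCLike.star_def, _root_.map_mul, map_add, map_sub, map_neg,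
        Complex.conj_I, Complex.conj_ofReal]
      try ring
    · simp [Matrix.mul_apply, Fin.sum_univ_three, Matrix.one_apply, Matrix.diagonal,
        RCLike.star_def, _root_.map_mul, map_add, map_sub, map_neg,
        Complex.conj_I, Complex.conj_ofReal]
      try linear_combination (2*(ω:ℂ)*Complex.I*(h3:ℂ)^2 + 2*(ω:ℂ)*Complex.I*(h2:ℂ)^2 + -2*(ω:ℂ)^3*Complex.I) * hσ2 + (-2*(ω:ℂ)*Complex.I*(h3:ℂ)^2 + -2*(ω:ℂ)*Complex.I*(h2:ℂ)^2) * hω2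
    · simp [Matrix.mul_apply, Fin.sum_univ_three, Matrix.one_apply, Matrix.diagonal,
        RCLike.star_def, _root_.map_mul, map_add, map_sub, map_neg,
        Complex.conj_I, Complex.conj_ofReal]
      try ring
    · simp [Matrix.mul_apply, Fin.sum_univ_three, Matrix.one_apply, Matrix.diagonal,
        RCLike.star_def, _root_.map_mul, map_add, map_sub, map_neg,
        Complex.conj_I, Complex.conj_ofReal]
      try ring
    · simp [Matrix.mul_apply, Fin.sum_univ_three, Matrix.one_apply, Matrix.diagonal,
        RCLike.star_def, _root_.map_mul, map_add, map_sub, map_neg,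
        Complex.conj_I, Complex.conj_ofReal]
      try ring
    · simp [Matrix.mul_apply, Fin.sum_univ_three, Matrix.one_apply, Matrix.diagonal,
        RCLike.star_def, _root_.map_mul, map_add, map_sub, map_neg,
        Complex.conj_I, Complex.conj_ofReal]
      try ring
  have hstar : star ((((Real.sqrt 2 * ω * σ : ℝ)):ℂ)⁻¹) = (((Real.sqrt 2 * ω * σ : ℝ)):ℂ)⁻¹ := by
    rw [star_inv₀, RCLike.star_def, Complex.conj_ofReal]
  constructor
  · rw [hMN, Matrix.conjTranspose_smul, hstar, Matrix.smul_mul, Matrix.mul_smul, hNN,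
      smul_smul, smul_smul]
    have : (((Real.sqrt 2 * ω * σ : ℝ)):ℂ)⁻¹ * (((Real.sqrt 2 * ω * σ : ℝ)):ℂ)⁻¹ *
        ((2:ℂ) * (ω:ℂ)^2 * (σ:ℂ)^2) = 1 := by
      rw [← hk2]; field_simp
    rw [this, one_smul]
  · rw [hMN, Matrix.conjTranspose_smul, hstar, Matrix.smul_mul, Matrix.mul_smul,
      Matrix.smul_mul, hNGN, smul_smul, smul_smul]
    have : (((Real.sqrt 2 * ω * σ : ℝ)):ℂ)⁻¹ * (((Real.sqrt 2 * ω * σ : ℝ)):ℂ)⁻¹ *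
        ((2:ℂ) * (ω:ℂ)^2 * (σ:ℂ)^2) = 1 := by
      rw [← hk2]; field_simp
    rw [this, one_smul]
end

section
/- Let ĥ ∈ ℝ³ with σ := √(ĥ₂² + ĥ₃²) > 0, let D = diag(D₁,D₂,D₃), let ε ≠ 0 and α̂, η̂ > 0, and let C ∈ SO(3) and Λ be as in Proposition 1 (so that Cᵀ Γ C = Λ with Γv = ĥ × v and Λ = [[0,−ω,0],[ω,0,0],[0,0,0]], ω := |ĥ|). Set E := Cᵀ D C. Suppose m : ℝ → ℝ³ is twice continuously differentiable and satisfies ε ṁ = ĥ × m + ε m × (D m) + ε³ α̂ m × ṁ + ε³ η̂ m × m̈. Then the curve x(τ) := Cᵀ m(η̂ ε² τ) satisfies x″ × x + x′ = ε η̂ Λ x + ε² [ η̂ x × (E x) + α̂ x × x′ ], where ′ denotes d/dτ. -/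
open Matrix Real
set_option maxHeartbeats 4000000

section Aux

lemma crossident6 (M : Matrix (Fin 3) (Fin 3) ℝ) (a b : Fin 3 → ℝ) :
    Mᵀ.mulVec ((M.mulVec a) ⨯₃ (M.mulVec b)) = M.det • (a ⨯₃ b) := by
  ext i
  fin_cases i <;>
    simp [Matrix.mulVec, dotProduct, crossProduct, Matrix.det_fin_three,
      Fin.sum_univ_three] <;> ring

lemma smul_cross6 (c : ℝ) (a b : Fin 3 → ℝ) : (c • a) ⨯₃ b = c • (a ⨯₃ b) := by
  ext i; fin_cases i <;> simp [crossProduct] <;> ring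

lemma cross_smul6 (c : ℝ) (a b : Fin 3 → ℝ) : a ⨯₃ (c • b) = c • (a ⨯₃ b) := by
  ext i; fin_cases i <;> simp [crossProduct] <;> ring

lemma cross_as_mulVec6 (h1 h2 h3 : ℝ) (v : Fin 3 → ℝ) :
    ![h1, h2, h3] ⨯₃ v = (!![0, -h3, h2; h3, 0, -h1; -h2, h1, 0]).mulVec v := by
  ext i; fin_cases i <;>
    simp [crossProduct, Matrix.mulVec, dotProduct, Fin.sum_univ_three] <;> ring

end Aux

theorem stmt_6' (h1 h2 h3 σ ω : ℝ)
    (hσdef : σ = Real.sqrt (h2 ^ 2 + h3 ^ 2))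
    (hωdef : ω = Real.sqrt (h1 ^ 2 + h2 ^ 2 + h3 ^ 2))
    (hσ : 0 < σ)
    (D1 D2 D3 ε αh ηh : ℝ) (hε : ε ≠ 0) (hαh : 0 < αh) (hηh : 0 < ηh)
    (C E : Matrix (Fin 3) (Fin 3) ℝ)
    (hC : C = ω⁻¹ • !![σ, 0, h1;
        -σ⁻¹ * h1 * h2, σ⁻¹ * ω * h3, h2;
        -σ⁻¹ * h1 * h3, -σ⁻¹ * ω * h2, h3])
    (hE : E = Cᵀ * Matrix.diagonal ![D1, D2, D3] * C)
    (m : ℝ → (Fin 3 → ℝ)) (hm : ContDiff ℝ 2 m)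
    (hODE : ∀ t : ℝ, ε • deriv m t =
      ![h1, h2, h3] ⨯₃ (m t)
        + ε • ((m t) ⨯₃ ((Matrix.diagonal ![D1, D2, D3]).mulVec (m t)))
        + (ε ^ 3 * αh) • ((m t) ⨯₃ (deriv m t))
        + (ε ^ 3 * ηh) • ((m t) ⨯₃ (deriv (deriv m) t)))
    (x : ℝ → (Fin 3 → ℝ)) (hx : x = fun τ => Cᵀ.mulVec (m (ηh * ε ^ 2 * τ))) :
    ∀ τ : ℝ,
      (deriv (deriv x) τ) ⨯₃ (x τ) + deriv x τ
        = (ε * ηh) • (!![0, -ω, 0; ω, 0, 0; 0, 0, 0]).mulVec (x τ)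
          + ε ^ 2 • (ηh • ((x τ) ⨯₃ (E.mulVec (x τ)))
              + αh • ((x τ) ⨯₃ (deriv x τ))) := by
  -- basic scalar facts
  have hσ2 : σ ^ 2 = h2 ^ 2 + h3 ^ 2 := by
    rw [hσdef]; exact Real.sq_sqrt (by positivity)
  have hpos : 0 < h1 ^ 2 + h2 ^ 2 + h3 ^ 2 := by nlinarith [hσ2, sq_nonneg h1]
  have hω : 0 < ω := by rw [hωdef]; exact Real.sqrt_pos.mpr hpos
  have hω2 : ω ^ 2 = h1 ^ 2 + h2 ^ 2 + h3 ^ 2 := by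
    rw [hωdef]; exact Real.sq_sqrt (le_of_lt hpos)
  have hσ0 : σ ≠ 0 := ne_of_gt hσ
  have hω0 : ω ≠ 0 := ne_of_gt hω
  have hT : Cᵀ = ω⁻¹ • !![σ, -σ⁻¹ * h1 * h2, -σ⁻¹ * h1 * h3;
      0, σ⁻¹ * ω * h3, -σ⁻¹ * ω * h2; h1, h2, h3] := by
    subst hC; rw [Matrix.transpose_smul]; congr 1
    ext i j; fin_cases i <;> fin_cases j <;> rfl
  have g1 : Cᵀ * C = 1 := by
    rw [hT, hC, Matrix.smul_mul, Matrix.mul_smul, smul_smul, Matrix.mul_fin_three]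
    ext i j
    fin_cases i <;> fin_cases j <;>
      all_goals try simp [Matrix.one_apply]
    all_goals try field_simp
    all_goals try refine Or.inr ?_
    all_goals first
    | ring1
    | linear_combination hσ2
    | linear_combination -hω2
    | linear_combination hσ2 - hω2
    | linear_combination h1*hσ2
    | linear_combination h2*hσ2 - h2*hω2
    | linear_combination h3*hω2 - h3*hσ2
    | linear_combination h2*h3*hσ2 - h2*h3*hω2
    | linear_combination (h2^2-ω^2)*hσ2 - h2^2*hω2
    | linear_combination (h3^2-ω^2)*hσ2 - h3^2*hω2
    | linear_combination (σ^2-h1^2)*hσ2 - σ^2*hω2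
    | linear_combination -ω^2*hσ2
    | linear_combination -ω*hσ2
    | linear_combination -hσ2
  have g2 : C * Cᵀ = 1 := by
    rw [hT, hC, Matrix.smul_mul, Matrix.mul_smul, smul_smul, Matrix.mul_fin_three]
    ext i j
    fin_cases i <;> fin_cases j <;>
      all_goals try simp [Matrix.one_apply]
    all_goals try field_simp
    all_goals try refine Or.inr ?_
    all_goals first
    | ring1
    | linear_combination hσ2
    | linear_combination -hω2
    | linear_combination hσ2 - hω2
    | linear_combination h1*hσ2
    | linear_combination h2*hσ2 - h2*hω2
    | linear_combination h3*hω2 - h3*hσ2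
    | linear_combination h2*h3*hσ2 - h2*h3*hω2
    | linear_combination (h2^2-ω^2)*hσ2 - h2^2*hω2
    | linear_combination (h3^2-ω^2)*hσ2 - h3^2*hω2
    | linear_combination (σ^2-h1^2)*hσ2 - σ^2*hω2
    | linear_combination -ω^2*hσ2
    | linear_combination -ω*hσ2
  have g3 : C.det = 1 := by
    rw [hC, Matrix.det_smul, Matrix.det_fin_three]
    simp
    field_simp
    linear_combination (-h1^2) * hσ2 - σ^2 * hω2
  have g4 : Cᵀ * !![0, -h3, h2; h3, 0, -h1; -h2, h1, 0]
      = !![0, -ω, 0; ω, 0, 0; 0, 0, 0] * Cᵀ := by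
    rw [hT, Matrix.smul_mul, Matrix.mul_smul, Matrix.mul_fin_three, Matrix.mul_fin_three]
    congr 1
    ext i j
    fin_cases i <;> fin_cases j <;>
      all_goals try simp
    all_goals try field_simp
    all_goals try refine Or.inr ?_
    all_goals first
    | ring1
    | linear_combination hσ2
    | linear_combination -hω2
    | linear_combination hσ2 - hω2
    | linear_combination h1*hσ2
    | linear_combination h2*hσ2 - h2*hω2
    | linear_combination h3*hω2 - h3*hσ2
    | linear_combination h2*h3*hσ2 - h2*h3*hω2
    | linear_combination (h2^2-ω^2)*hσ2 - h2^2*hω2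
    | linear_combination (h3^2-ω^2)*hσ2 - h3^2*hω2
    | linear_combination (σ^2-h1^2)*hσ2 - σ^2*hω2
    | linear_combination -ω^2*hσ2
    | linear_combination -ω*hσ2
    | linear_combination -hσ2
  -- cross product equivariance of Cᵀ
  have crossC : ∀ a b : Fin 3 → ℝ,
      (Cᵀ.mulVec a) ⨯₃ (Cᵀ.mulVec b) = Cᵀ.mulVec (a ⨯₃ b) := by
    intro a b
    have hci := crossident6 Cᵀ a b
    rw [Matrix.transpose_transpose, Matrix.det_transpose, g3, one_smul] at hci
    calc (Cᵀ.mulVec a) ⨯₃ (Cᵀ.mulVec b)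
        = (Cᵀ * C).mulVec ((Cᵀ.mulVec a) ⨯₃ (Cᵀ.mulVec b)) := by
          rw [g1, Matrix.one_mulVec]
      _ = Cᵀ.mulVec (C.mulVec ((Cᵀ.mulVec a) ⨯₃ (Cᵀ.mulVec b))) := by
          rw [← Matrix.mulVec_mulVec]
      _ = Cᵀ.mulVec (a ⨯₃ b) := by rw [hci]
  -- Γ conjugation
  have hGam : ∀ v : Fin 3 → ℝ, Cᵀ.mulVec (![h1, h2, h3] ⨯₃ v)
      = (!![0, -ω, 0; ω, 0, 0; 0, 0, 0]).mulVec (Cᵀ.mulVec v) := by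
    intro v
    rw [cross_as_mulVec6, Matrix.mulVec_mulVec, g4, ← Matrix.mulVec_mulVec]
  -- E conjugation
  have hEfact : ∀ v : Fin 3 → ℝ,
      E.mulVec (Cᵀ.mulVec v) = Cᵀ.mulVec ((Matrix.diagonal ![D1, D2, D3]).mulVec v) := by
    intro v
    rw [Matrix.mulVec_mulVec, hE, Matrix.mul_assoc, Matrix.mul_assoc, g2, Matrix.mul_one,
      ← Matrix.mulVec_mulVec]
  -- derivatives
  set c : ℝ := ηh * ε ^ 2 with hc
  have hmd : Differentiable ℝ m := hm.differentiable (by norm_num)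
  have hm11 : ContDiff ℝ (1 + 1) m := by
    exact_mod_cast hm
  have hmd2 : Differentiable ℝ (deriv m) :=
    ((contDiff_succ_iff_deriv.mp hm11).2.2).differentiable (by norm_num)
  let L : (Fin 3 → ℝ) →L[ℝ] (Fin 3 → ℝ) := (Matrix.mulVecLin Cᵀ).toContinuousLinearMap
  have hLapp : ∀ v, L v = Cᵀ.mulVec v := fun v => rfl
  have hinner : ∀ τ : ℝ, HasDerivAt (fun τ : ℝ => c * τ) c τ := by
    intro τ
    simpa using (hasDerivAt_id τ).const_mul c
  have hx1 : ∀ τ : ℝ, HasDerivAt x (c • Cᵀ.mulVec (deriv m (c * τ))) τ := by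
    intro τ
    have h0 : HasDerivAt (fun τ : ℝ => m (c * τ)) (c • deriv m (c * τ)) τ := by
      simpa [Function.comp_def] using ((hmd (c * τ)).hasDerivAt).scomp τ (hinner τ)
    have h1' := (L.hasFDerivAt.comp_hasDerivAt τ h0)
    have : HasDerivAt (fun τ : ℝ => L (m (c * τ))) (c • Cᵀ.mulVec (deriv m (c * τ))) τ := by
      simpa [hLapp, Matrix.mulVec_smul, Function.comp_def] using h1'
    simpa [hx, hLapp, Function.comp] using this
  have hxd : deriv x = fun τ => c • Cᵀ.mulVec (deriv m (c * τ)) :=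
    funext fun τ => (hx1 τ).deriv
  have hx2 : ∀ τ : ℝ, HasDerivAt (deriv x)
      ((c * c) • Cᵀ.mulVec (deriv (deriv m) (c * τ))) τ := by
    intro τ
    have h0 : HasDerivAt (fun τ : ℝ => deriv m (c * τ)) (c • deriv (deriv m) (c * τ)) τ := by
      simpa [Function.comp_def] using ((hmd2 (c * τ)).hasDerivAt).scomp τ (hinner τ)
    have h1' := (L.hasFDerivAt.comp_hasDerivAt τ h0)
    have h2' : HasDerivAt (fun τ : ℝ => L (deriv m (c * τ)))
        (c • Cᵀ.mulVec (deriv (deriv m) (c * τ))) τ := by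
      simpa [hLapp, Matrix.mulVec_smul, Function.comp_def] using h1'
    have h3' := h2'.const_smul c
    rw [hxd]
    simpa [hLapp, smul_smul, Pi.smul_def, mul_assoc] using h3'
  have hxdd : ∀ τ : ℝ, deriv (deriv x) τ = (c * c) • Cᵀ.mulVec (deriv (deriv m) (c * τ)) :=
    fun τ => (hx2 τ).deriv
  -- final assembly
  intro τ
  have key := congrArg (Cᵀ.mulVec) (hODE (c * τ))
  rw [Matrix.mulVec_add, Matrix.mulVec_add, Matrix.mulVec_add, Matrix.mulVec_smul,
    Matrix.mulVec_smul, Matrix.mulVec_smul, Matrix.mulVec_smul, hGam] at key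
  rw [hxdd, hxd, hx]
  simp only []
  rw [smul_cross6, cross_smul6, hEfact]
  rw [crossC, crossC, crossC]
  have hanti : deriv (deriv m) (c * τ) ⨯₃ m (c * τ)
      = -(m (c * τ) ⨯₃ deriv (deriv m) (c * τ)) := (cross_anticomm _ _).symm
  rw [hanti, Matrix.mulVec_neg]
  set u := Cᵀ.mulVec (m (c * τ))
  set V := Cᵀ.mulVec (deriv m (c * τ))
  set P := Cᵀ.mulVec (m (c * τ) ⨯₃ (Matrix.diagonal ![D1, D2, D3]).mulVec (m (c * τ)))
  set Q := Cᵀ.mulVec (m (c * τ) ⨯₃ deriv m (c * τ))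
  set W := Cᵀ.mulVec (m (c * τ) ⨯₃ deriv (deriv m) (c * τ))
  set LU := (!![0, -ω, 0; ω, 0, 0; 0, 0, 0]).mulVec u
  ext i
  have ki := congrFun key i
  simp only [Pi.add_apply, Pi.smul_apply, Pi.neg_apply, smul_eq_mul] at ki ⊢
  linear_combination (ηh * ε) * ki

/-- If `m` solves the rescaled iLLG equation
`ε ṁ = ĥ × m + ε m × (D m) + ε³ α̂ m × ṁ + ε³ η̂ m × m̈`, then the curve
`x(τ) := Cᵀ m(η̂ ε² τ)` (with `C` the rotation of Proposition 1 and `E = Cᵀ D C`)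
satisfies `x″ × x + x′ = ε η̂ Λ x + ε² [ η̂ x × (E x) + α̂ x × x′ ]`. -/
theorem stmt_6 (h1 h2 h3 σ ω : ℝ)
    (hσdef : σ = Real.sqrt (h2 ^ 2 + h3 ^ 2))
    (hωdef : ω = Real.sqrt (h1 ^ 2 + h2 ^ 2 + h3 ^ 2))
    (hσ : 0 < σ)
    (D1 D2 D3 ε αh ηh : ℝ) (hε : ε ≠ 0) (hαh : 0 < αh) (hηh : 0 < ηh)
    (C E : Matrix (Fin 3) (Fin 3) ℝ)
    (hC : C = ω⁻¹ • !![σ, 0, h1;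
        -σ⁻¹ * h1 * h2, σ⁻¹ * ω * h3, h2;
        -σ⁻¹ * h1 * h3, -σ⁻¹ * ω * h2, h3])
    (hE : E = Cᵀ * Matrix.diagonal ![D1, D2, D3] * C)
    (m : ℝ → (Fin 3 → ℝ)) (hm : ContDiff ℝ 2 m)
    (hODE : ∀ t : ℝ, ε • deriv m t =
      ![h1, h2, h3] ⨯₃ (m t)
        + ε • ((m t) ⨯₃ ((Matrix.diagonal ![D1, D2, D3]).mulVec (m t)))
        + (ε ^ 3 * αh) • ((m t) ⨯₃ (deriv m t))
        + (ε ^ 3 * ηh) • ((m t) ⨯₃ (deriv (deriv m) t)))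
    (x : ℝ → (Fin 3 → ℝ)) (hx : x = fun τ => Cᵀ.mulVec (m (ηh * ε ^ 2 * τ))) :
    ∀ τ : ℝ,
      (deriv (deriv x) τ) ⨯₃ (x τ) + deriv x τ
        = (ε * ηh) • (!![0, -ω, 0; ω, 0, 0; 0, 0, 0]).mulVec (x τ)
          + ε ^ 2 • (ηh • ((x τ) ⨯₃ (E.mulVec (x τ)))
              + αh • ((x τ) ⨯₃ (deriv x τ))) :=
  stmt_6' h1 h2 h3 σ ω hσdef hωdef hσ D1 D2 D3 ε αh ηh hε hαh hηh C E hC hE m hm hODE x hx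
end

section
/- Let ω̂ > 0, let Λ̂ := [[0,−ω̂,0],[ω̂,0,0],[0,0,0]], let Ê be a symmetric real 3×3 matrix, and let μ ∈ ℝ. If x : ℝ → ℝ³ is a twice continuously differentiable solution of (T_μ): x″ × x + x′ = μ Λ̂ x + μ² [ x × (Ê x) + x × x′ ] (where ′ = d/dτ), then x(τ) · x′(τ) = 0 for all τ, and consequently |x(τ)| = |x(0)| for all τ ∈ ℝ. -/
open Matrix Real

/-- Any `C²` solution of the transformed equation
`x″ × x + x′ = μ Λ̂ x + μ² [ x × (Ê x) + x × x′ ]` (with `Λ̂ = [[0,−ω̂,0],[ω̂,0,0],[0,0,0]]`,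
`ω̂ > 0`, `Ê` symmetric) satisfies `x · x′ = 0` everywhere, hence `|x(τ)| = |x(0)|`. -/
theorem stmt_7 (ωh : ℝ) (hω : 0 < ωh)
    (E : Matrix (Fin 3) (Fin 3) ℝ) (hE : E.IsSymm) (μ : ℝ)
    (x : ℝ → (Fin 3 → ℝ)) (hx : ContDiff ℝ 2 x)
    (hODE : ∀ τ : ℝ,
      (deriv (deriv x) τ) ⨯₃ (x τ) + deriv x τ
        = μ • (!![0, -ωh, 0; ωh, 0, 0; 0, 0, 0]).mulVec (x τ)
          + μ ^ 2 • ((x τ) ⨯₃ (E.mulVec (x τ)) + (x τ) ⨯₃ (deriv x τ))) :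
    (∀ τ : ℝ, x τ ⬝ᵥ deriv x τ = 0) ∧
    (∀ τ : ℝ, Real.sqrt (x τ ⬝ᵥ x τ) = Real.sqrt (x 0 ⬝ᵥ x 0)) := by
  have h1 : ∀ τ : ℝ, x τ ⬝ᵥ deriv x τ = 0 := by
    intro τ
    have h := congrArg (fun v => x τ ⬝ᵥ v) (hODE τ)
    simp only [dotProduct_add, dotProduct_smul, dot_cross_self, dot_self_cross] at h
    have hΛ : x τ ⬝ᵥ (!![0, -ωh, 0; ωh, 0, 0; 0, 0, 0]).mulVec (x τ) = 0 := by
      simp [dotProduct, mulVec, Fin.sum_univ_three, Matrix.cons_val_zero, Matrix.cons_val_one, Matrix.head_cons, Matrix.vecHead, Matrix.vecTail]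
      ring
    rw [hΛ] at h
    simpa using h
  refine ⟨h1, fun τ => ?_⟩
  have hdx : ∀ t : ℝ, HasDerivAt x (deriv x t) t := fun t =>
    ((hx.differentiable (by norm_num)) t).hasDerivAt
  have hf : ∀ t : ℝ, HasDerivAt (fun s => x s ⬝ᵥ x s)
      (deriv x t ⬝ᵥ x t + x t ⬝ᵥ deriv x t) t := by
    intro t
    have hi := hasDerivAt_pi.mp (hdx t)
    have : HasDerivAt (fun s => ∑ i : Fin 3, x s i * x s i)
        (∑ i : Fin 3, (deriv x t i * x t i + x t i * deriv x t i)) t :=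
      HasDerivAt.fun_sum fun i _ => (hi i).mul (hi i)
    simpa [dotProduct, Finset.sum_add_distrib] using this
  have hconst : ∀ t : ℝ, x t ⬝ᵥ x t = x 0 ⬝ᵥ x 0 := by
    have : ∀ t : ℝ, deriv (fun s => x s ⬝ᵥ x s) t = 0 := by
      intro t
      rw [(hf t).deriv, dotProduct_comm, h1 t]
      ring
    intro t
    exact is_const_of_deriv_eq_zero (fun s => (hf s).differentiableAt) this t 0
  rw [hconst τ]
end

section
/- (Spherical-coordinate form of the transformed iLLG equation.) Let ω̂ > 0, μ ∈ ℝ, Λ̂ := [[0,−ω̂,0],[ω̂,0,0],[0,0,0]], and Ê a symmetric real 3×3 matrix with entries ê_{ij}. Let I ⊆ ℝ be an interval and φ, θ : I → ℝ twice continuously differentiable with θ(τ) ∈ (0, π) for all τ ∈ I, and set x(τ) := (sin θ(τ) cos φ(τ), sin θ(τ) sin φ(τ), cos θ(τ)). Then x satisfies x″ × x + x′ = μ Λ̂ x + μ² [ x × (Ê x) + x × x′ ] on I if and only if (φ, θ) satisfies on I the system: sin θ · φ″ + 2 cos θ · φ′ θ′ + θ′ = μ² F₁ and θ″ − cos θ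 sin θ (φ′)² − sin θ φ′ + μ ω̂ sin θ = μ² F₂, where F₁ = [(ê₁₁−ê₂₂) cos φ sin φ − 2 ê₁₂ cos²φ + ê₁₂ − φ′] sin θ + [ê₁₃ sin φ − ê₂₃ cos φ] cos θ and F₂ = [(ê₂₂−ê₁₁) cos²φ − 2 ê₁₂ cos φ sin φ + ê₃₃ − ê₂₂] sin θ cos θ + [ê₂₃ sin φ + ê₁₃ cos φ](2 sin²θ − 1) − θ′. -/
open Matrix Real


private theorem hasDerivAt_of_eq' {f : ℝ → ℝ} {v w x : ℝ} (h : HasDerivAt f v x)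
    (e : v = w) : HasDerivAt f w x := e ▸ h

/-- On an open interval `I` where `θ(τ) ∈ (0,π)`, the unit-sphere curve
`x = (sin θ cos φ, sin θ sin φ, cos θ)` solves the transformed iLLG equation
`x″ × x + x′ = μ Λ̂ x + μ² [ x × (Ê x) + x × x′ ]` if and only if `(φ,θ)` solves the
spherical system with right-hand sides `μ²F₁`, `μ²F₂`. -/
theorem stmt_8 (ωh : ℝ) (hω : 0 < ωh) (μ : ℝ)
    (e11 e12 e13 e22 e23 e33 : ℝ)
    (E : Matrix (Fin 3) (Fin 3) ℝ)
    (hE : E = !![e11, e12, e13; e12, e22, e23; e13, e23, e33])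
    (I : Set ℝ) (hIopen : IsOpen I) (hIconn : I.OrdConnected)
    (φ θ : ℝ → ℝ) (hφ : ContDiffOn ℝ 2 φ I) (hθ : ContDiffOn ℝ 2 θ I)
    (hrange : ∀ τ ∈ I, θ τ ∈ Set.Ioo 0 π)
    (x : ℝ → (Fin 3 → ℝ))
    (hx : x = fun τ => ![Real.sin (θ τ) * Real.cos (φ τ),
        Real.sin (θ τ) * Real.sin (φ τ), Real.cos (θ τ)]) :
    (∀ τ ∈ I,
      crossProduct (deriv (deriv x) τ) (x τ) + deriv x τ
        = μ • (!![0, -ωh, 0; ωh, 0, 0; 0, 0, 0]).mulVec (x τ)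
          + μ ^ 2 • (crossProduct (x τ) (E.mulVec (x τ)) + crossProduct (x τ) (deriv x τ)))
    ↔
    (∀ τ ∈ I,
      (Real.sin (θ τ) * deriv (deriv φ) τ
          + 2 * Real.cos (θ τ) * deriv φ τ * deriv θ τ + deriv θ τ
        = μ ^ 2 *
          (((e11 - e22) * Real.cos (φ τ) * Real.sin (φ τ)
              - 2 * e12 * (Real.cos (φ τ)) ^ 2 + e12 - deriv φ τ) * Real.sin (θ τ)
            + (e13 * Real.sin (φ τ) - e23 * Real.cos (φ τ)) * Real.cos (θ τ)))
      ∧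
      (deriv (deriv θ) τ
          - Real.cos (θ τ) * Real.sin (θ τ) * (deriv φ τ) ^ 2
          - Real.sin (θ τ) * deriv φ τ + μ * ωh * Real.sin (θ τ)
        = μ ^ 2 *
          (((e22 - e11) * (Real.cos (φ τ)) ^ 2
              - 2 * e12 * Real.cos (φ τ) * Real.sin (φ τ) + e33 - e22)
                * Real.sin (θ τ) * Real.cos (θ τ)
            + (e23 * Real.sin (φ τ) + e13 * Real.cos (φ τ))
                * (2 * (Real.sin (θ τ)) ^ 2 - 1) - deriv θ τ))) := by
  subst hE hx
  refine forall₂_congr fun τ hτ => ?_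
  have hτI : I ∈ nhds τ := hIopen.mem_nhds hτ
  have hθd : ∀ σ ∈ I, HasDerivAt θ (deriv θ σ) σ := fun σ hσ =>
    ((hθ.contDiffAt (hIopen.mem_nhds hσ)).differentiableAt (by norm_num)).hasDerivAt
  have hφd : ∀ σ ∈ I, HasDerivAt φ (deriv φ σ) σ := fun σ hσ =>
    ((hφ.contDiffAt (hIopen.mem_nhds hσ)).differentiableAt (by norm_num)).hasDerivAt
  have hθ1 : ContDiffOn ℝ 1 (deriv θ) I := hθ.deriv_of_isOpen hIopen (by norm_num)
  have hφ1 : ContDiffOn ℝ 1 (deriv φ) I := hφ.deriv_of_isOpen hIopen (by norm_num)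
  have hθ2 : HasDerivAt (deriv θ) (deriv (deriv θ) τ) τ :=
    ((hθ1.contDiffAt hτI).differentiableAt (by norm_num)).hasDerivAt
  have hφ2 : HasDerivAt (deriv φ) (deriv (deriv φ) τ) τ :=
    ((hφ1.contDiffAt hτI).differentiableAt (by norm_num)).hasDerivAt
  have hxd : ∀ σ ∈ I, HasDerivAt (fun τ => ![Real.sin (θ τ) * Real.cos (φ τ),
      Real.sin (θ τ) * Real.sin (φ τ), Real.cos (θ τ)])
      ![Real.cos (θ σ) * deriv θ σ * Real.cos (φ σ)
          + Real.sin (θ σ) * (-Real.sin (φ σ) * deriv φ σ),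
        Real.cos (θ σ) * deriv θ σ * Real.sin (φ σ)
          + Real.sin (θ σ) * (Real.cos (φ σ) * deriv φ σ),
        -Real.sin (θ σ) * deriv θ σ] σ := by
    intro σ hσ
    rw [hasDerivAt_pi]
    intro i
    fin_cases i
    · exact (hθd σ hσ).sin.mul (hφd σ hσ).cos
    · exact (hθd σ hσ).sin.mul (hφd σ hσ).sin
    · exact (hθd σ hσ).cos
  have hd1 : ∀ σ ∈ I, deriv (fun τ => ![Real.sin (θ τ) * Real.cos (φ τ),
      Real.sin (θ τ) * Real.sin (φ τ), Real.cos (θ τ)]) σ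
      = ![Real.cos (θ σ) * deriv θ σ * Real.cos (φ σ)
          + Real.sin (θ σ) * (-Real.sin (φ σ) * deriv φ σ),
        Real.cos (θ σ) * deriv θ σ * Real.sin (φ σ)
          + Real.sin (θ σ) * (Real.cos (φ σ) * deriv φ σ),
        -Real.sin (θ σ) * deriv θ σ] :=
    fun σ hσ => (hxd σ hσ).deriv
  have hyd : HasDerivAt (fun σ =>
      ![Real.cos (θ σ) * deriv θ σ * Real.cos (φ σ)
          + Real.sin (θ σ) * (-Real.sin (φ σ) * deriv φ σ),
        Real.cos (θ σ) * deriv θ σ * Real.sin (φ σ)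
          + Real.sin (θ σ) * (Real.cos (φ σ) * deriv φ σ),
        -Real.sin (θ σ) * deriv θ σ])
      ![((Real.cos (θ τ)) * (Real.cos (φ τ)) * (deriv (deriv θ) τ) + (-2) * (Real.cos (θ τ)) * (Real.sin (φ τ)) * (deriv θ τ) * (deriv φ τ) + (-1) * (Real.sin (θ τ)) * (Real.cos (φ τ)) * (deriv φ τ)^2 + (-1) * (Real.sin (θ τ)) * (Real.cos (φ τ)) * (deriv θ τ)^2 + (-1) * (Real.sin (θ τ)) * (Real.sin (φ τ)) * (deriv (deriv φ) τ)), ((2) * (Real.cos (θ τ)) * (Real.cos (φ τ)) * (deriv θ τ) * (deriv φ τ) + (Real.cos (θ τ)) * (Real.sin (φ τ)) * (deriv (deriv θ) τ) + (Real.sin (θ τ)) * (Real.cos (φ τ)) * (deriv (deriv φ) τ) + (-1) * (Real.sin (θ τ)) * (Real.sin (φ τ)) * (deriv φ τ)^2 + (-1) * (Real.sin (θ τ)) * (Real.sin (φ τ)) * (deriv θ τ)^2), ((-1) * (Real.cos (θ τ)) * (deriv θ τ)^2 + (-1) * (Real.sin (θ τ)) * (deriv (deriv θ) τ))] τ :=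 by
    rw [hasDerivAt_pi]
    intro i
    fin_cases i
    · exact hasDerivAt_of_eq' ((((hθd τ hτ).cos.mul hθ2).mul (hφd τ hτ).cos).add
        ((hθd τ hτ).sin.mul (((hφd τ hτ).sin.neg).mul hφ2))) (by show _ = ((Real.cos (θ τ)) * (Real.cos (φ τ)) * (deriv (deriv θ) τ) + (-2) * (Real.cos (θ τ)) * (Real.sin (φ τ)) * (deriv θ τ) * (deriv φ τ) + (-1) * (Real.sin (θ τ)) * (Real.cos (φ τ)) * (deriv φ τ)^2 + (-1) * (Real.sin (θ τ)) * (Real.cos (φ τ)) * (deriv θ τ)^2 + (-1) * (Real.sin (θ τ)) * (Real.sin (φ τ)) * (deriv (deriv φ) τ)); simp only [Pi.mul_apply, Pi.neg_apply]; ring)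
    · exact hasDerivAt_of_eq' ((((hθd τ hτ).cos.mul hθ2).mul (hφd τ hτ).sin).add
        ((hθd τ hτ).sin.mul (((hφd τ hτ).cos).mul hφ2))) (by show _ = ((2) * (Real.cos (θ τ)) * (Real.cos (φ τ)) * (deriv θ τ) * (deriv φ τ) + (Real.cos (θ τ)) * (Real.sin (φ τ)) * (deriv (deriv θ) τ) + (Real.sin (θ τ)) * (Real.cos (φ τ)) * (deriv (deriv φ) τ) + (-1) * (Real.sin (θ τ)) * (Real.sin (φ τ)) * (deriv φ τ)^2 + (-1) * (Real.sin (θ τ)) * (Real.sin (φ τ)) * (deriv θ τ)^2); simp only [Pi.mul_apply, Pi.neg_apply]; ring)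
    · exact hasDerivAt_of_eq' (((hθd τ hτ).sin.neg).mul hθ2) (by show _ = ((-1) * (Real.cos (θ τ)) * (deriv θ τ)^2 + (-1) * (Real.sin (θ τ)) * (deriv (deriv θ) τ)); simp only [Pi.mul_apply, Pi.neg_apply]; ring)
  have hd2 : deriv (deriv (fun τ => ![Real.sin (θ τ) * Real.cos (φ τ),
      Real.sin (θ τ) * Real.sin (φ τ), Real.cos (θ τ)])) τ
      = ![((Real.cos (θ τ)) * (Real.cos (φ τ)) * (deriv (deriv θ) τ) + (-2) * (Real.cos (θ τ)) * (Real.sin (φ τ)) * (deriv θ τ) * (deriv φ τ) + (-1) * (Real.sin (θ τ)) * (Real.cos (φ τ)) * (deriv φ τ)^2 + (-1) * (Real.sin (θ τ)) * (Real.cos (φ τ)) * (deriv θ τ)^2 + (-1) * (Real.sin (θ τ)) * (Real.sin (φ τ)) * (deriv (deriv φ) τ)), ((2) * (Real.cos (θ τ)) * (Real.cos (φ τ)) * (deriv θ τ) * (deriv φ τ) + (Real.cos (θ τ)) * (Real.sin (φ τ)) * (deriv (deriv θ) τ) + (Real.sin (θ τ)) * (Real.cos (φ τ)) * (deriv (deriv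 φ) τ) + (-1) * (Real.sin (θ τ)) * (Real.sin (φ τ)) * (deriv φ τ)^2 + (-1) * (Real.sin (θ τ)) * (Real.sin (φ τ)) * (deriv θ τ)^2), ((-1) * (Real.cos (θ τ)) * (deriv θ τ)^2 + (-1) * (Real.sin (θ τ)) * (deriv (deriv θ) τ))] := by
    have he := Filter.eventuallyEq_of_mem hτI hd1
    rw [he.deriv_eq]
    exact hyd.deriv
  have hSne : Real.sin (θ τ) ≠ 0 :=
    ne_of_gt (Real.sin_pos_of_pos_of_lt_pi (hrange τ hτ).1 (hrange τ hτ).2)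
  have py1 : Real.sin (θ τ) ^ 2 + Real.cos (θ τ) ^ 2 = 1 := Real.sin_sq_add_cos_sq _
  have py2 : Real.sin (φ τ) ^ 2 + Real.cos (φ τ) ^ 2 = 1 := Real.sin_sq_add_cos_sq _
  rw [hd2, hd1 τ hτ]
  constructor
  · intro h
    have h0 := congrFun h 0
    have h1 := congrFun h 1
    have h2 := congrFun h 2
    simp only [cross_apply, Matrix.mulVec, dotProduct, Fin.sum_univ_three,
      Matrix.cons_val_zero, Matrix.cons_val_one, Matrix.head_cons, Matrix.cons_val_two,
      Matrix.tail_cons, Matrix.cons_val', Matrix.empty_val', Matrix.cons_val_fin_one,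
      Matrix.head_fin_const, Matrix.of_apply, Pi.add_apply, Pi.smul_apply, smul_eq_mul] at h0 h1 h2
    constructor
    · apply mul_left_cancel₀ hSne
      linear_combination (-1 : ℝ) * h2 + ((-1) * μ^2 * e12 + (deriv (deriv φ) τ) + (deriv φ τ) * μ^2 + (Real.cos (φ τ))^2 * μ^2 * e12 + (-1) * (Real.cos (φ τ))^2 * (deriv (deriv φ) τ) + (-1) * (Real.cos (φ τ))^2 * (deriv φ τ) * μ^2 + (Real.sin (φ τ))^2 * μ^2 * e12 + (-1) * (Real.sin (φ τ))^2 * (deriv (deriv φ) τ) + (-1) * (Real.sin (φ τ))^2 * (deriv φ τ) * μ^2) * py1 + (μ^2 * e12 + (-1) * (deriv (deriv φ) τ) + (-1) * (deriv φ τ) * μ^2 + (-1) * (Real.cos (θ τ))^2 * μ^2 * e12 + (Real.cos (θ τ))^2 * (deriv (deriv φ) τ) + (Real.cos (θ τ))^2 * (deriv φ τ) * μ^2 + (-2) * (Real.sin (θ τ)) * (Real.cos (θ τ)) * (deriv θ τ) * (deriv φ τ)) * py2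
    · linear_combination Real.sin (φ τ) * h0 - Real.cos (φ τ) * h1
        + ((-2) * (Real.cos (φ τ)) * μ^2 * e13 + (-1) * (Real.cos (φ τ))^2 * (deriv (deriv θ) τ) + (-1) * (Real.cos (φ τ))^2 * (deriv θ τ) * μ^2 + (Real.cos (φ τ))^3 * μ^2 * e13 + (-2) * (Real.sin (φ τ)) * μ^2 * e23 + (Real.sin (φ τ)) * (Real.cos (φ τ))^2 * μ^2 * e23 + (-1) * (Real.sin (φ τ))^2 * (deriv (deriv θ) τ) + (-1) * (Real.sin (φ τ))^2 * (deriv θ τ) * μ^2 + (Real.sin (φ τ))^2 * (Real.cos (φ τ)) * μ^2 * e13 + (Real.sin (φ τ))^3 * μ^2 * e23) * py1 + ((-1) * (deriv (deriv θ) τ) + (-1) * (deriv θ τ) * μ^2 + (Real.cos (φ τ)) * μ^2 * e13 + (Real.sin (φ τ)) * μ^2 * e23 + (-1) * (Real.cos (θ τ))^2 * (Real.cos (φ τ)) * μ^2 * e13 + (-1) * (Real.cos (θ τ))^2 * (Real.sin (φ τ)) * μ^2 * e23 + (-1) * (Real.sin (θ τ)) * μ * ωh + (Real.sin (θ τ))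 * (deriv φ τ) + (Real.sin (θ τ)) * (Real.cos (θ τ)) * μ^2 * e33 + (-1) * (Real.sin (θ τ)) * (Real.cos (θ τ)) * μ^2 * e22 + (Real.sin (θ τ)) * (Real.cos (θ τ)) * (deriv φ τ)^2) * py2
  · rintro ⟨h1, h2⟩
    funext i
    fin_cases i
    · simp [cross_apply, Matrix.mulVec, dotProduct, Fin.sum_univ_three]
      linear_combination (Real.cos (θ τ) * Real.cos (φ τ)) * h1 + Real.sin (φ τ) * h2
        + ((Real.sin (φ τ)) * (deriv (deriv θ) τ) + (Real.sin (φ τ)) * (deriv θ τ) * μ^2 + (Real.sin (φ τ)) * (Real.cos (φ τ)) * μ^2 * e13 + (Real.sin (φ τ))^2 * μ^2 * e23) * py1 + ((-1) * (Real.cos (θ τ))^2 * μ^2 * e23 + (-2) * (Real.sin (θ τ)) * (Real.cos (θ τ)) * (Real.cos (φ τ)) * μ^2 * e12) * py2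
    · simp [cross_apply, Matrix.mulVec, dotProduct, Fin.sum_univ_three]
      linear_combination (Real.cos (θ τ) * Real.sin (φ τ)) * h1 - Real.cos (φ τ) * h2
        + ((-1) * (Real.cos (φ τ)) * (deriv (deriv θ) τ) + (-1) * (Real.cos (φ τ)) * (deriv θ τ) * μ^2 + (-1) * (Real.cos (φ τ))^2 * μ^2 * e13 + (-1) * (Real.sin (φ τ)) * (Real.cos (φ τ)) * μ^2 * e23) * py1 + ((Real.cos (θ τ))^2 * μ^2 * e13 + (-1) * (Real.sin (θ τ)) * (Real.cos (θ τ)) * (Real.cos (φ τ)) * μ^2 * e22 + (Real.sin (θ τ)) * (Real.cos (θ τ)) * (Real.cos (φ τ)) * μ^2 * e11) * py2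
    · simp [cross_apply, Matrix.mulVec, dotProduct, Fin.sum_univ_three]
      linear_combination (-Real.sin (θ τ)) * h1
        + ((-1) * μ^2 * e12 + (deriv (deriv φ) τ) + (deriv φ τ) * μ^2 + (Real.cos (φ τ))^2 * μ^2 * e12 + (-1) * (Real.cos (φ τ))^2 * (deriv (deriv φ) τ) + (-1) * (Real.cos (φ τ))^2 * (deriv φ τ) * μ^2 + (Real.sin (φ τ))^2 * μ^2 * e12 + (-1) * (Real.sin (φ τ))^2 * (deriv (deriv φ) τ) + (-1) * (Real.sin (φ τ))^2 * (deriv φ τ) * μ^2) * py1 + (μ^2 * e12 + (-1) * (deriv (deriv φ) τ) + (-1) * (deriv φ τ) * μ^2 + (-1) * (Real.cos (θ τ))^2 * μ^2 * e12 + (Real.cos (θ τ))^2 * (deriv (deriv φ) τ) + (Real.cos (θ τ))^2 * (deriv φ τ) * μ^2 + (-2) * (Real.sin (θ τ)) * (Real.cos (θ τ)) * (deriv θ τ) * (deriv φ τ)) * py2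
end

section
/- (Annihilation of secular terms in the multiple-time-scales expansion.) Let ω̂ > 0, let ê₁₁, ê₁₂, ê₁₃, ê₂₂, ê₂₃ ∈ ℝ, and let C₁, C₂, C₃, C₄ ∈ ℝ. Define w₁*(T₁) := ω̂⁻¹[ê₁₃ sin(ω̂T₁) − ê₂₃ cos(ω̂T₁)] + C₁, w₂* := C₂, w₃*(T₁) := (2ω̂)⁻¹[(ê₁₁−ê₂₂) cos²(ω̂T₁) + ê₁₂ sin(2ω̂T₁)] + C₃, w₄* := C₄, and set ξ₀(T₀,T₁) := sin(T₀) w₂* − (1 − cos T₀) w₄* + w₁*(T₁) and χ₀(T₀,T₁) := sin(T₀) w₄* + (1 − cos T₀) w₂* + w₃*(T₁). Then for all (T₀,T₁) ∈ ℝ²: ∂_{T₁}χ₀ + 2 ∂²_{T₀T₁}ξ₀ + (ê₁₁−ê₂₂) sin(ω̂T₁) cos(ω̂T₁) + ê₁₂(1 − 2cos²(ω̂T₁)) = 0, and −∂_{T₁}ξ₀ + 2 ∂²_{T₀T₁}χ₀ + ê₂₃ sin(ω̂T₁) + ê₁₃ cos(ω̂T₁) = 0. Consequently the first-order corrections in the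 multiple-time-scales hierarchy vanish identically (ξ₁ = χ₁ ≡ 0). -/
open Real

lemma aux_w1 (ωh e13 e23 C1 : ℝ) (hω : ωh ≠ 0) (t : ℝ) :
    HasDerivAt (fun s => ωh⁻¹ * (e13 * Real.sin (ωh * s) - e23 * Real.cos (ωh * s)) + C1)
      (e13 * Real.cos (ωh * t) + e23 * Real.sin (ωh * t)) t := by
  have h1 : HasDerivAt (fun s : ℝ => ωh * s) ωh t := by
    simpa using (hasDerivAt_id t).const_mul ωh
  have hs := (Real.hasDerivAt_sin (ωh * t)).comp t h1
  have hc := (Real.hasDerivAt_cos (ωh * t)).comp t h1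
  have := (((hs.const_mul e13).sub (hc.const_mul e23)).const_mul ωh⁻¹).add_const C1
  refine this.congr_deriv ?_
  field_simp
  ring

lemma aux_w3 (ωh e11 e22 e12 C3 : ℝ) (hω : ωh ≠ 0) (t : ℝ) :
    HasDerivAt (fun s => (2 * ωh)⁻¹ * ((e11 - e22) * (Real.cos (ωh * s)) ^ 2
        + e12 * Real.sin (2 * ωh * s)) + C3)
      (-((e11 - e22) * Real.sin (ωh * t) * Real.cos (ωh * t)) + e12 * Real.cos (2 * ωh * t)) t := by
  have h1 : HasDerivAt (fun s : ℝ => ωh * s) ωh t := by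
    simpa using (hasDerivAt_id t).const_mul ωh
  have h2 : HasDerivAt (fun s : ℝ => 2 * ωh * s) (2 * ωh) t := by
    simpa using (hasDerivAt_id t).const_mul (2 * ωh)
  have hc := (Real.hasDerivAt_cos (ωh * t)).comp t h1
  have hc2 := hc.pow 2
  have hs2 := (Real.hasDerivAt_sin (2 * ωh * t)).comp t h2
  have := (((hc2.const_mul (e11 - e22)).add (hs2.const_mul e12)).const_mul (2 * ωh)⁻¹).add_const C3
  refine this.congr_deriv ?_
  simp only [Function.comp_apply]
  field_simp
  ring

/-- **annihilation of secular terms.** With the choice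
`w₁*, w₂* = C₂, w₃*, w₄* = C₄` of the slow-time functions, the zeroth-order
multiple-time-scales solution `(ξ₀, χ₀)` makes both non-homogeneous (secular) terms
of the first-order system vanish identically. -/
theorem stmt_10 (ωh : ℝ) (hω : 0 < ωh)
    (e11 e12 e13 e22 e23 : ℝ) (C1 C2 C3 C4 : ℝ)
    (w1 w3 : ℝ → ℝ)
    (hw1 : w1 = fun T1 =>
      ωh⁻¹ * (e13 * Real.sin (ωh * T1) - e23 * Real.cos (ωh * T1)) + C1)
    (hw3 : w3 = fun T1 =>
      (2 * ωh)⁻¹ * ((e11 - e22) * (Real.cos (ωh * T1)) ^ 2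
        + e12 * Real.sin (2 * ωh * T1)) + C3)
    (ξ₀ χ₀ : ℝ → ℝ → ℝ)
    (hξ : ξ₀ = fun T0 T1 => Real.sin T0 * C2 - (1 - Real.cos T0) * C4 + w1 T1)
    (hχ : χ₀ = fun T0 T1 => Real.sin T0 * C4 + (1 - Real.cos T0) * C2 + w3 T1) :
    ∀ T0 T1 : ℝ,
      (deriv (fun s => χ₀ T0 s) T1
          + 2 * deriv (fun u => deriv (fun s => ξ₀ u s) T1) T0
          + (e11 - e22) * Real.sin (ωh * T1) * Real.cos (ωh * T1)
          + e12 * (1 - 2 * (Real.cos (ωh * T1)) ^ 2) = 0)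
      ∧
      (-(deriv (fun s => ξ₀ T0 s) T1)
          + 2 * deriv (fun u => deriv (fun s => χ₀ u s) T1) T0
          + e23 * Real.sin (ωh * T1) + e13 * Real.cos (ωh * T1) = 0) := by
  intro T0 T1
  have hω' : ωh ≠ 0 := ne_of_gt hω
  subst hw1 hw3 hξ hχ
  -- derivatives in the slow variable
  have dξ : ∀ u : ℝ, deriv (fun s => Real.sin u * C2 - (1 - Real.cos u) * C4 +
        (ωh⁻¹ * (e13 * Real.sin (ωh * s) - e23 * Real.cos (ωh * s)) + C1)) T1
      = e13 * Real.cos (ωh * T1) + e23 * Real.sin (ωh * T1) := by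
    intro u
    exact (((aux_w1 ωh e13 e23 C1 hω' T1).const_add _)).deriv
  have dχ : ∀ u : ℝ, deriv (fun s => Real.sin u * C4 + (1 - Real.cos u) * C2 +
        ((2 * ωh)⁻¹ * ((e11 - e22) * (Real.cos (ωh * s)) ^ 2
          + e12 * Real.sin (2 * ωh * s)) + C3)) T1
      = -((e11 - e22) * Real.sin (ωh * T1) * Real.cos (ωh * T1)) + e12 * Real.cos (2 * ωh * T1) := by
    intro u
    exact (((aux_w3 ωh e11 e22 e12 C3 hω' T1).const_add _)).deriv
  simp only [dξ, dχ, deriv_const]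
  constructor
  · have : Real.cos (2 * ωh * T1) = 2 * (Real.cos (ωh * T1))^2 - 1 := by
      rw [show 2 * ωh * T1 = 2 * (ωh * T1) by ring, Real.cos_two_mul]
    rw [this]; ring
  · ring
end
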